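/- Let I = (G, S, T, k) be an instance of Disjoint Subset-DFVS Compression, Z ⊆ V(G) ∖ T, and suppose T' is a solution of I with T' ∩ Z = ∅ and f_{G,T}(T') ∪ r_{G,T}(T') ⊆ Z. Then T' is a shadowless solution of the reduced instance I/Z, i.e., T' is a solution of I/Z with f_{G',T}(T') = r_{G',T}(T') = ∅. -/

import Mathlib

variable {V : Type*}

/-- `Reach E W a b`: there is a path from `a` to `b` in `G ∖ W`. -/
def Reach (E : V → V → Prop) (W : Set V) (a b : V) : Prop :=
  a ∉ W ∧ b ∉ W ∧ Relation.ReflTransGen (fun x y => E x y ∧ x ∉ W ∧ y ∉ W) a b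

/-- `l` is a walk from `a` to `b` in the graph with edge relation `E`. -/
def WalkFromTo (E : V → V → Prop) (a b : V) (l : List V) : Prop :=
  l.Chain' E ∧ l.head? = some a ∧ l.getLast? = some b

/-- The edge relation of the torso of `G` on `C`: there is an edge `(a,b)`
whenever `G` has an `a → b` walk whose internal vertices all lie outside `C`. -/
def torsoE (E : V → V → Prop) (C : Set V) : V → V → Prop := fun a b =>
  a ∈ C ∧ b ∈ C ∧ ∃ l : List V, WalkFromTo E a b l ∧ 2 ≤ l.length ∧
    ∀ x ∈ l.tail.dropLast, x ∉ C

/-- The marked edge set `S'` of the torso: edges of `S` with both endpoints in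
`C`, together with every torso edge `(a,b)` arising from an `a → b` walk with
internal vertices outside `C` that contains an edge of `S`. -/
def torsoS (E : V → V → Prop) (C : Set V) (S : Set (V × V)) : Set (V × V) :=
  {p | p ∈ S ∧ p.1 ∈ C ∧ p.2 ∈ C} ∪
    {p | p.1 ∈ C ∧ p.2 ∈ C ∧ ∃ l : List V, WalkFromTo E p.1 p.2 l ∧
      2 ≤ l.length ∧ (∀ x ∈ l.tail.dropLast, x ∉ C) ∧
      ∃ q ∈ l.zip l.tail, q ∈ S}

/-- `G ∖ W` has a closed walk through `v` using an edge of `S`. -/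
def HasSCWThrough (E : V → V → Prop) (S : Set (V × V)) (W : Set V) (v : V) : Prop :=
  ∃ l : List V, l.Chain' E ∧ 2 ≤ l.length ∧ l.head? = l.getLast? ∧
    (∀ x ∈ l, x ∉ W) ∧ v ∈ l ∧ ∃ q ∈ l.zip l.tail, q ∈ S

/-- `G ∖ W` has a closed walk using an edge of `S` (an `S`-closed-walk). -/
def HasSCW (E : V → V → Prop) (S : Set (V × V)) (W : Set V) : Prop :=
  ∃ v, HasSCWThrough E S W v

/-- The forward shadow of `W` with respect to `T`, within the vertex set `U`:
vertices `v ∈ U ∖ (W ∪ T)` with no `T`-to-`v` path in `G ∖ W`. -/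
def fshadowOn (E : V → V → Prop) (U T W : Set V) : Set V :=
  {v | v ∈ U ∧ v ∉ W ∧ v ∉ T ∧ ∀ t ∈ T, ¬ Reach E W t v}

/-- The reverse shadow of `W` with respect to `T`, within the vertex set `U`:
vertices `v ∈ U ∖ (W ∪ T)` with no `v`-to-`T` path in `G ∖ W`. -/
def rshadowOn (E : V → V → Prop) (U T W : Set V) : Set V :=
  {v | v ∈ U ∧ v ∉ W ∧ v ∉ T ∧ ∀ t ∈ T, ¬ Reach E W v t}

/-!
Every edge of the torso on `C = Zᶜ` is realised by a walk of `G` whose internal vertices lie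
in `Z`, and `Z` avoids `T'`; so torso paths in `G' ∖ T'` expand to paths in `G ∖ T'`, and an
`S'`-closed walk in `G' ∖ T'` expands to an `S`-closed walk in `G ∖ T'`, which `T'` excludes.
Conversely, a path of `G ∖ T'` between two vertices of `C` compresses to a torso path, by
replacing each excursion into `Z` with one torso edge. Hence a vertex of `C` in the forward or
reverse shadow of `T'` in `G'` lies in the same shadow in `G`, which is contained in `Z`.
-/

section Walks

variable {E : V → V → Prop} {W : Set V} {a b c : V} {l : List V}

namespace Reach

lemma refl (ha : a ∉ W) : Reach E W a a := ⟨ha, ha, .refl⟩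

lemma single (h : E a b) (ha : a ∉ W) (hb : b ∉ W) : Reach E W a b :=
  ⟨ha, hb, .single ⟨h, ha, hb⟩⟩

lemma trans (hab : Reach E W a b) (hbc : Reach E W b c) : Reach E W a c :=
  ⟨hab.1, hbc.2.1, hab.2.2.trans hbc.2.2⟩

end Reach

lemma reach_getElem_getElem (hl : l.IsChain E) (hW : ∀ x ∈ l, x ∉ W) {i j : ℕ} (hij : i ≤ j)
    (hj : j < l.length) : Reach E W l[i] l[j] := by
  induction j, hij using Nat.le_induction with
  | base => exact .refl (hW _ (List.getElem_mem _))
  | succ j _ ih =>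
    exact (ih (by omega)).trans
      (.single (hl.getElem j hj) (hW _ (List.getElem_mem _)) (hW _ (List.getElem_mem _)))

namespace WalkFromTo

lemma getElem_zero (hl : WalkFromTo E a b l) : ∃ h : 0 < l.length, l[0] = a :=
  List.getElem?_eq_some_iff.mp (List.head?_eq_getElem? ▸ hl.2.1)

lemma getElem_length_sub_one (hl : WalkFromTo E a b l) :
    ∃ h : l.length - 1 < l.length, l[l.length - 1] = b :=
  List.getElem?_eq_some_iff.mp (List.getLast?_eq_getElem? ▸ hl.2.2)

lemma reach (hl : WalkFromTo E a b l) (hW : ∀ x ∈ l, x ∉ W) : Reach E W a b := by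
  obtain ⟨h₀, rfl⟩ := hl.getElem_zero
  obtain ⟨h₁, rfl⟩ := hl.getElem_length_sub_one
  exact reach_getElem_getElem hl.1 hW (Nat.zero_le _) h₁

lemma reach_of_mem_zip (hl : WalkFromTo E a b l) (hW : ∀ x ∈ l, x ∉ W) {q : V × V}
    (hq : q ∈ l.zip l.tail) : Reach E W a q.1 ∧ Reach E W q.2 b := by
  obtain ⟨i, hi, rfl⟩ := List.mem_iff_getElem.mp hq
  simp only [List.length_zip, List.length_tail] at hi
  obtain ⟨h₀, rfl⟩ := hl.getElem_zero
  obtain ⟨h₁, rfl⟩ := hl.getElem_length_sub_one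
  simp only [List.getElem_zip, List.getElem_tail]
  exact ⟨reach_getElem_getElem hl.1 hW (Nat.zero_le _) _,
    reach_getElem_getElem hl.1 hW (by omega) h₁⟩

lemma mem_cases (hl : WalkFromTo E a b l) {x : V} (hx : x ∈ l) :
    x = a ∨ x = b ∨ x ∈ l.tail.dropLast := by
  obtain ⟨i, hi, rfl⟩ := List.mem_iff_getElem.mp hx
  obtain ⟨h₀, rfl⟩ := hl.getElem_zero
  obtain ⟨h₁, rfl⟩ := hl.getElem_length_sub_one
  rcases Nat.eq_zero_or_pos i with rfl | hi₀
  · exact .inl rfl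
  rcases eq_or_ne i (l.length - 1) with rfl | hi₁
  · exact .inr (.inl rfl)
  refine .inr (.inr (List.mem_iff_getElem.mpr ⟨i - 1, by simp; omega, ?_⟩))
  simp only [List.getElem_dropLast, List.getElem_tail]
  congr 1
  omega

lemma forall_notMem (hl : WalkFromTo E a b l) (ha : a ∉ W) (hb : b ∉ W)
    (hint : ∀ x ∈ l.tail.dropLast, x ∉ W) : ∀ x ∈ l, x ∉ W := fun x hx => by
  rcases hl.mem_cases hx with rfl | rfl | hx
  exacts [ha, hb, hint x hx]

end WalkFromTo

lemma exists_isChain_of_reflTransGen {P : V → Prop}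
    (h : Relation.ReflTransGen (fun u v => E u v ∧ P v) a b) :
    ∃ l, (a :: l).IsChain E ∧ (a :: l).getLast? = some b ∧ ∀ v ∈ l, P v := by
  induction h with
  | refl => exact ⟨[], .singleton a, rfl, by simp⟩
  | tail _ hbc ih =>
    obtain ⟨l, hl, hlast, hP⟩ := ih
    refine ⟨l ++ [_], ?_, by rw [← List.cons_append, List.getLast?_concat], ?_⟩
    · rw [← List.cons_append, List.isChain_append]
      exact ⟨hl, .singleton _, by simp_all⟩
    · simpa [or_imp, forall_and, hbc.2] using hP

lemma HasSCW.exists_reach {S : Set (V × V)} (h : HasSCW E S W) :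
    ∃ p ∈ S, Reach E W p.2 p.1 := by
  obtain ⟨-, l, hl, hlen, hcl, hW, -, q, hq, hqS⟩ := h
  cases l with
  | nil => simp at hlen
  | cons a t =>
    obtain ⟨h₁, h₂⟩ := WalkFromTo.reach_of_mem_zip ⟨hl, rfl, hcl.symm⟩ hW hq
    exact ⟨q, hqS, h₂.trans h₁⟩

lemma hasSCW_of_reach {S : Set (V × V)} {p : V × V} (hp : p ∈ S) (hE : E p.1 p.2)
    (h : Reach E W p.2 p.1) : HasSCW E S W := by
  obtain ⟨h₂, h₁, h⟩ := h
  obtain ⟨l, hl, hlast⟩ := List.exists_isChain_cons_of_relationReflTransGen h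
  have hW : ∀ x ∈ p.2 :: l, x ∉ W :=
    hl.induction (· ∉ W) _ (fun _ _ hxy _ => hxy.2.2) fun _ => h₂
  refine ⟨p.1, p.1 :: p.2 :: l, .cons_cons hE (hl.imp fun _ _ hxy => hxy.1), by simp, ?_,
    by simpa [h₁] using hW, by simp, p, by simp, hp⟩
  rw [List.getLast?_cons_cons, List.getLast?_eq_some_getLast (List.cons_ne_nil _ _), hlast]
  rfl

end Walks

section Torso

variable {E : V → V → Prop} {C W : Set V} {a b c : V}

lemma Reach.of_torso (hW : W ⊆ C) (h : Reach (torsoE E C) W a b) : Reach E W a b := by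
  obtain ⟨ha, -, h⟩ := h
  induction h with
  | refl => exact .refl ha
  | tail _ hxy ih =>
    obtain ⟨⟨-, -, m, hm, -, hint⟩, hx, hy⟩ := hxy
    exact ih.trans (hm.reach (hm.forall_notMem hx hy fun z hz hzW => hint z hz (hW hzW)))

lemma torsoE_of_reflTransGen (ha : a ∈ C) (hb : b ∈ C)
    (h : Relation.ReflTransGen (fun u v => E u v ∧ v ∉ C) a c) (hcb : E c b) :
    torsoE E C a b := by
  obtain ⟨l, hl, hlast, hout⟩ := exists_isChain_of_reflTransGen h
  refine ⟨ha, hb, a :: l ++ [b], ⟨?_, rfl, List.getLast?_concat⟩, by simp, by simpa using hout⟩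
  show List.IsChain E _
  rw [List.isChain_append]
  exact ⟨hl, .singleton _, by simp_all⟩

lemma Reach.torso (h : Reach E W a b) (ha : a ∈ C) (hb : b ∈ C) :
    Reach (torsoE E C) W a b := by
  obtain ⟨haW, -, h⟩ := h
  -- Invariant: `y` is reached from the last vertex `c ∈ C` of the walk, through vertices
  -- outside `C`; whenever the walk re-enters `C`, that segment is a single torso edge.
  have key : ∀ y, Relation.ReflTransGen (fun x y => E x y ∧ x ∉ W ∧ y ∉ W) a y →
      ∃ c ∈ C, Reach (torsoE E C) W a c ∧
        Relation.ReflTransGen (fun u v => E u v ∧ v ∉ C) c y := by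
    intro y hy
    induction hy with
    | refl => exact ⟨a, ha, .refl haW, .refl⟩
    | @tail y z _ hyz ih =>
      obtain ⟨c, hc, hac, hcy⟩ := ih
      by_cases hz : z ∈ C
      · exact ⟨z, hz, hac.trans (.single (torsoE_of_reflTransGen hc hz hcy hyz.1) hac.2.1
          hyz.2.2), .refl⟩
      · exact ⟨c, hc, hac, hcy.tail ⟨hyz.1, hz⟩⟩
  obtain ⟨c, -, hac, hcb⟩ := key b h
  rcases hcb.cases_tail with rfl | ⟨_, -, -, hb'⟩
  · exact hac
  · exact absurd hb hb'

lemma exists_reach_of_mem_torsoS {S : Set (V × V)} (hW : W ⊆ C) {p : V × V}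
    (hp : p ∈ torsoS E C S) (h₁ : p.1 ∉ W) (h₂ : p.2 ∉ W) :
    ∃ s ∈ S, Reach E W p.1 s.1 ∧ Reach E W s.2 p.2 := by
  rcases hp with ⟨hpS, -, -⟩ | ⟨-, -, m, hm, -, hint, q, hq, hqS⟩
  · exact ⟨p, hpS, .refl h₁, .refl h₂⟩
  · exact ⟨q, hqS, hm.reach_of_mem_zip
      (hm.forall_notMem h₁ h₂ fun z hz hzW => hint z hz (hW hzW)) hq⟩

lemma HasSCW.of_torso {S : Set (V × V)} (hSE : ∀ p ∈ S, E p.1 p.2) (hW : W ⊆ C)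
    (h : HasSCW (torsoE E C) (torsoS E C S) W) : HasSCW E S W := by
  obtain ⟨p, hp, hreach⟩ := h.exists_reach
  obtain ⟨s, hs, h₁, h₂⟩ := exists_reach_of_mem_torsoS hW hp hreach.2.1 hreach.1
  exact hasSCW_of_reach hs (hSE s hs) (h₂.trans ((hreach.of_torso hW).trans h₁))

lemma fshadowOn_torsoE_subset {T : Set V} (hT : T ⊆ C) :
    fshadowOn (torsoE E C) C T W ⊆ fshadowOn E Set.univ T W ∩ C :=
  fun _ ⟨hvC, hvW, hvT, hno⟩ =>
    ⟨⟨trivial, hvW, hvT, fun t ht hr => hno t ht (hr.torso (hT ht) hvC)⟩, hvC⟩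

lemma rshadowOn_torsoE_subset {T : Set V} (hT : T ⊆ C) :
    rshadowOn (torsoE E C) C T W ⊆ rshadowOn E Set.univ T W ∩ C :=
  fun _ ⟨hvC, hvW, hvT, hno⟩ =>
    ⟨⟨trivial, hvW, hvT, fun t ht hr => hno t ht (hr.torso hvC (hT ht))⟩, hvC⟩

end Torso

theorem stmt16_general (E : V → V → Prop) (S : Set (V × V)) (hSE : ∀ p ∈ S, E p.1 p.2) (T : Set V)
    (Z : Set V) (hZ : Disjoint Z T) (T' : Set V) (hsol : ¬ HasSCW E S T') (hT'Z : Disjoint T' Z)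
    (hshadow : fshadowOn E Set.univ T T' ∪ rshadowOn E Set.univ T T' ⊆ Z) :
    ¬ HasSCW (torsoE E Zᶜ) (torsoS E Zᶜ S) T' ∧
      fshadowOn (torsoE E Zᶜ) Zᶜ T T' = ∅ ∧
      rshadowOn (torsoE E Zᶜ) Zᶜ T T' = ∅ := by
  have hTZ : T ⊆ Zᶜ := hZ.subset_compl_left
  have hf : fshadowOn (torsoE E Zᶜ) Zᶜ T T' ⊆ Z ∩ Zᶜ := (fshadowOn_torsoE_subset hTZ).trans
    (Set.inter_subset_inter_left _ (Set.subset_union_left.trans hshadow))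
  have hr : rshadowOn (torsoE E Zᶜ) Zᶜ T T' ⊆ Z ∩ Zᶜ := (rshadowOn_torsoE_subset hTZ).trans
    (Set.inter_subset_inter_left _ (Set.subset_union_right.trans hshadow))
  exact ⟨fun h => hsol (h.of_torso hSE hT'Z.subset_compl_right),
    Set.subset_eq_empty hf (Set.inter_compl_self Z),
    Set.subset_eq_empty hr (Set.inter_compl_self Z)⟩

/-- If `T'` is a solution of the instance `I = (G, S, T, k)` of Disjoint
Subset-DFVS Compression with `T' ∩ Z = ∅` and `f_{G,T}(T') ∪ r_{G,T}(T') ⊆ Z`,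
then `T'` is a shadowless solution of the reduced instance `I/Z`. -/
theorem stmt16 [Fintype V] (E : V → V → Prop) (S : Set (V × V))
    (hSE : ∀ p ∈ S, E p.1 p.2) (T : Set V) (k : ℕ)
    (hT : ¬ HasSCW E S T) (Z : Set V) (hZ : Disjoint Z T)
    (T' : Set V) (hT'T : Disjoint T' T) (hT'k : T'.ncard ≤ k)
    (hsol : ¬ HasSCW E S T') (hT'Z : Disjoint T' Z)
    (hshadow : fshadowOn E Set.univ T T' ∪ rshadowOn E Set.univ T T' ⊆ Z) :
    ¬ HasSCW (torsoE E Zᶜ) (torsoS E Zᶜ S) T' ∧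
      fshadowOn (torsoE E Zᶜ) Zᶜ T T' = ∅ ∧
      rshadowOn (torsoE E Zᶜ) Zᶜ T T' = ∅ :=
  stmt16_general E S hSE T Z hZ T' hsol hT'Z hshadow
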